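/- A dynamic envy-free and weakly non-wasteful mechanism always exists (witnessed by Home Penalized Deferred Acceptance), for any finite horizon, any arrival sequences of children and homes, any strict cardinal utilities, and any positive waiting costs. -/

import Mathlib

/-- A one-to-one (partial) matching between children and homes. -/
structure Matching (C H : Type) where
  toHome : C → Option H
  toChild : H → Option C
  consistent : ∀ c h, toHome c = some h ↔ toChild h = some c

/-- A dynamic matching market: cardinal utilities, arrival times, waiting costs. -/
structure Market (C H : Type) where
  U : C → H → ℝ
  V : H → C → ℝ
  arrC : C → ℕ
  arrH : H → ℕ
  wC : ℝ
  wH : ℝ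

/-- Accept/reject action profiles of homes over time. -/
abbrev Actions (H : Type) := H → ℕ → Bool

/-- A dynamic mechanism: given the homes' action profile, a matching in each period. -/
abbrev Mechanism (C H : Type) := Actions H → ℕ → Matching C H

open scoped Classical in
/-- The counterfactual profile in which home `h` rejects every placement before `t'`,
accepts at `t'`, and otherwise plays as in `a`; all other homes play as in `a`. -/
noncomputable def cfProfile {H : Type} (a : Actions H) (h : H) (t' : ℕ) : Actions H :=
  fun h' k =>
    if h' = h then (if k < t' then false else if k = t' then true else a h' k)
    else a h' k

namespace Market

variable {C H : Type}

/-- Time-discounted utility of home `h` for child `c` at time `t`: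
`V_h^t(c) = V_h(c) - (t - arrival(h)) * w_H`. -/
noncomputable def Vt (M : Market C H) (h : H) (c : C) (t : ℕ) : ℝ :=
  M.V h c - ((t : ℝ) - (M.arrH h : ℝ)) * M.wH

/-- Child `c` is active (present in the market) at time `t`:
she has arrived and no home has yet accepted a placement with her. -/
def activeC (M : Market C H) (Q : Mechanism C H) (a : Actions H) (c : C) (t : ℕ) : Prop :=
  M.arrC c ≤ t ∧ ¬ ∃ k < t, ∃ h, (Q a k).toHome c = some h ∧ a h k = true

/-- Home `h` is active (present in the market) at time `t`:
it has arrived and has not yet accepted a placement. -/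
def activeH (M : Market C H) (Q : Mechanism C H) (a : Actions H) (h : H) (t : ℕ) : Prop :=
  M.arrH h ≤ t ∧ ¬ ∃ k < t, (Q a k).toChild h ≠ none ∧ a h k = true

/-- Admissibility: the mechanism only matches agents active in the current market. -/
def feasible (M : Market C H) (Q : Mechanism C H) : Prop :=
  ∀ a t c h, (Q a t).toHome c = some h → M.activeC Q a c t ∧ M.activeH Q a h t

/-- Child `c` has been adopted (placement accepted) by time `t`. -/
def childAdopted (M : Market C H) (Q : Mechanism C H) (a : Actions H) (c : C) (t : ℕ) : Prop :=
  ∃ k ≤ t, ∃ h, (Q a k).toHome c = some h ∧ a h k = true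

/-- Home `h` has accepted a placement by time `t`. -/
def homeAccepted (M : Market C H) (Q : Mechanism C H) (a : Actions H) (h : H) (t : ℕ) : Prop :=
  ∃ k ≤ t, (Q a k).toChild h ≠ none ∧ a h k = true

/-- Justified envy-freeness at every period and action profile: no mutually matched
child and home both strictly prefer each other to their assigned partners. -/
def justifiedEnvyFree (M : Market C H) (Q : Mechanism C H) : Prop :=
  ∀ a t c h h' c', (Q a t).toHome c = some h' → (Q a t).toChild h = some c' →
    ¬ (M.U c h' < M.U c h ∧ M.V h c' < M.V h c)

/-- Individual rationality at every period and action profile. -/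
def individuallyRational (M : Market C H) (Q : Mechanism C H) : Prop :=
  ∀ a t c h, (Q a t).toHome c = some h → 0 ≤ M.U c h ∧ 0 ≤ M.V h c

/-- Patience-freeness: any placement offered at `t` is weakly better (time-discounted)
than the placement the home would receive at any later `t'` in the counterfactual in
which it rejects all placements before `t'` and accepts at `t'`. -/
noncomputable def patienceFree (M : Market C H) (Q : Mechanism C H) : Prop :=
  ∀ (a : Actions H) (t : ℕ) (h : H) (c : C), (Q a t).toChild h = some c →
    ∀ t' > t, ∀ c', (Q (cfProfile a h t') t').toChild h = some c' →
      M.Vt h c' t' ≤ M.Vt h c t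

/-- Dynamic envy-freeness: justified envy-free, patience-free, individually rational. -/
noncomputable def dynamicEnvyFree (M : Market C H) (Q : Mechanism C H) : Prop :=
  M.justifiedEnvyFree Q ∧ M.patienceFree Q ∧ M.individuallyRational Q

/-- Strict non-wastefulness: after every history and action profile there is never an
active unmatched child and an active unmatched home that find each other acceptable. -/
def strictlyNonWasteful (M : Market C H) (Q : Mechanism C H) : Prop :=
  ∀ a t, ¬ ∃ c h, M.activeC Q a c t ∧ M.activeH Q a h t ∧
    0 ≤ M.U c h ∧ 0 ≤ M.V h c ∧ (Q a t).toHome c = none ∧ (Q a t).toChild h = none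

/-- Weak non-wastefulness: when every home accepts every offered placement,
no mutually acceptable unmatched pair ever remains. -/
def weaklyNonWasteful (M : Market C H) (Q : Mechanism C H) : Prop :=
  ∀ t, ¬ ∃ c h, M.activeC Q (fun _ _ => true) c t ∧ M.activeH Q (fun _ _ => true) h t ∧
    0 ≤ M.U c h ∧ 0 ≤ M.V h c ∧
    (Q (fun _ _ => true) t).toHome c = none ∧ (Q (fun _ _ => true) t).toChild h = none

/-- The mechanism is a deterministic function of the history of markets (active sets)
and past matchings. -/
def historyDetermined (M : Market C H) (Q : Mechanism C H) : Prop :=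
  ∀ a a' t,
    (∀ k ≤ t, ∀ c, M.activeC Q a c k ↔ M.activeC Q a' c k) →
    (∀ k ≤ t, ∀ h, M.activeH Q a h k ↔ M.activeH Q a' h k) →
    (∀ k < t, Q a k = Q a' k) →
    Q a t = Q a' t

/-- `x` is the realized (true-utility, time-discounted) payoff of home `h`:
the time-discounted utility of an accepted placement, or `0` if `h` never accepts. -/
noncomputable def payoffIs (M : Market C H) (Q : Mechanism C H) (a : Actions H)
    (h : H) (x : ℝ) : Prop :=
  (∃ t c, (Q a t).toChild h = some c ∧ a h t = true ∧ x = M.Vt h c t) ∨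
  ((∀ t c, (Q a t).toChild h = some c → a h t = false) ∧ x = 0)

end Market

/-!
The witness is home-penalized deferred acceptance with the harshest penalty: in every period
it runs deferred acceptance between the children still present and the homes that have never
been offered a placement. A home that rejects is thus never offered again. Delaying does not
change the history up to a home's first offer, so in the counterfactual the home was still
offered at the original time and gets nothing later: patience-freeness holds vacuously.
Justified envy-freeness, individual rationality and weak non-wastefulness all come from the
stability of each period's matching; for the last, when every home accepts, the never-offered
homes are exactly the active ones.
-/

open Finset

namespace Matching

variable {C H : Type}

structure IsStable (E : C → H → Prop) (U : C → H → ℝ) (V : H → C → ℝ) (μ : Matching C H) :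
    Prop where
  acceptable : ∀ c h, μ.toChild h = some c → E c h
  stable : ∀ c h, E c h →
    (∃ h', μ.toHome c = some h' ∧ U c h ≤ U c h') ∨ (∃ c', μ.toChild h = some c' ∧ V h c ≤ V h c')

variable {E : C → H → Prop} {U : C → H → ℝ} {V : H → C → ℝ} {μ : Matching C H}

theorem IsStable.not_blocking (hμ : μ.IsStable E U V) {c c' : C} {h h' : H} (hE : E c h)
    (hc : μ.toHome c = some h') (hh : μ.toChild h = some c') :
    ¬ (U c h' < U c h ∧ V h c' < V h c) := by
  rintro ⟨hU, hV⟩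
  rcases hμ.stable c h hE with ⟨h'', hc', hle⟩ | ⟨c'', hh', hle⟩
  · rw [hc] at hc'
    cases hc'
    exact hle.not_gt hU
  · rw [hh] at hh'
    cases hh'
    exact hle.not_gt hV

theorem IsStable.not_unmatched (hμ : μ.IsStable E U V) {c : C} {h : H} (hE : E c h)
    (hc : μ.toHome c = none) (hh : μ.toChild h = none) : False := by
  rcases hμ.stable c h hE with ⟨_, hc', _⟩ | ⟨_, hh', _⟩
  · simp [hc] at hc'
  · simp [hh] at hh'

end Matching

namespace DeferredAcceptance

open scoped Classical

variable {C H : Type} [Fintype C] (E : C → H → Prop) (V : H → C → ℝ)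

/- The state of home-proposing deferred acceptance is the family `R` of rejections: `R h` is the
set of children who have rejected home `h`. Each home proposes to its best acceptable child
outside `R h`, each child holds her best proposal, and the other proposals are rejected. -/
noncomputable def proposal (R : H → Finset C) (h : H) : Option C :=
  (univ.filter fun c => E c h ∧ c ∉ R h).toList.argmax (V h)

variable {E V} {R : H → Finset C}

theorem proposal_spec {h : H} {c : C} (hp : proposal E V R h = some c) :
    E c h ∧ c ∉ R h := by
  simpa using List.argmax_mem hp

theorem exists_proposal_ge {h : H} {c : C} (hE : E c h) (hc : c ∉ R h) :
    ∃ c', proposal E V R h = some c' ∧ V h c ≤ V h c' := by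
  have hmem : c ∈ (univ.filter fun c => E c h ∧ c ∉ R h).toList := by simpa using ⟨hE, hc⟩
  obtain ⟨c', hc'⟩ := Option.ne_none_iff_exists'.mp
    (mt List.argmax_eq_none.mp (List.ne_nil_of_mem hmem) : proposal E V R h ≠ none)
  exact ⟨c', hc', List.le_of_mem_argmax hmem hc'⟩

variable [Fintype H] (E V) (U : C → H → ℝ)

noncomputable def held (R : H → Finset C) (c : C) : Option H :=
  (univ.filter fun h => proposal E V R h = some c).toList.argmax (U c)

noncomputable def rejectStep (R : H → Finset C) : H → Finset C := fun h =>
  R h ∪ univ.filter fun c => proposal E V R h = some c ∧ held E V U R c ≠ some h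

def RejectionsJustified (R : H → Finset C) : Prop :=
  ∀ h c, c ∈ R h → ∃ h', held E V U R c = some h' ∧ U c h ≤ U c h'

variable {E V U}

theorem proposal_of_held {c : C} {h : H} (hh : held E V U R c = some h) :
    proposal E V R h = some c := by
  simpa using List.argmax_mem hh

theorem exists_held_ge {h : H} {c : C} (hp : proposal E V R h = some c) :
    ∃ h', held E V U R c = some h' ∧ U c h ≤ U c h' := by
  have hmem : h ∈ (univ.filter fun h => proposal E V R h = some c).toList := by simpa using hp
  obtain ⟨h', hh'⟩ := Option.ne_none_iff_exists'.mp
    (mt List.argmax_eq_none.mp (List.ne_nil_of_mem hmem) : held E V U R c ≠ none)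
  exact ⟨h', hh', List.le_of_mem_argmax hmem hh'⟩

theorem le_rejectStep : R ≤ rejectStep E V U R := fun _ => subset_union_left

theorem rejectStep_eq_of_held {c : C} {h : H} (hh : held E V U R c = some h) :
    rejectStep E V U R h = R h := by
  refine union_eq_left.mpr fun c' hc' => ?_
  obtain ⟨hp, hne⟩ := by simpa using hc'
  rw [proposal_of_held hh] at hp
  cases hp
  exact absurd hh hne

theorem exists_held_rejectStep_ge {c : C} {h : H} (hh : held E V U R c = some h) :
    ∃ h', held E V U (rejectStep E V U R) c = some h' ∧ U c h ≤ U c h' := by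
  have hp : proposal E V (rejectStep E V U R) h = some c := by
    rw [proposal, rejectStep_eq_of_held hh, ← proposal, proposal_of_held hh]
  exact exists_held_ge hp

theorem RejectionsJustified.rejectStep (hR : RejectionsJustified E V U R) :
    RejectionsJustified E V U (rejectStep E V U R) := by
  intro h c hc
  have hheld : ∃ h', held E V U R c = some h' ∧ U c h ≤ U c h' := by
    rcases mem_union.mp hc with hc | hc
    · exact hR h c hc
    · exact exists_held_ge (mem_filter.mp hc).2.1
  obtain ⟨h', hh', hle⟩ := hheld
  obtain ⟨h'', hh'', hle'⟩ := exists_held_rejectStep_ge hh'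
  exact ⟨h'', hh'', hle.trans hle'⟩

theorem exists_rejectStep_fixed :
    ∃ R, rejectStep E V U R = R ∧ RejectionsJustified E V U R := by
  suffices ∀ R, RejectionsJustified E V U R →
      ∃ R', rejectStep E V U R' = R' ∧ RejectionsJustified E V U R' from
    this (fun _ => ∅) fun _ _ hc => absurd hc (notMem_empty _)
  intro R
  induction R using WellFoundedGT.induction with
  | _ R ih =>
    intro hR
    by_cases hfix : rejectStep E V U R = R
    · exact ⟨R, hfix, hR⟩
    · exact ih _ (lt_of_le_of_ne le_rejectStep (Ne.symm hfix)) hR.rejectStep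

theorem held_eq_some_iff_of_fixed (hfix : rejectStep E V U R = R) {c : C} {h : H} :
    held E V U R c = some h ↔ proposal E V R h = some c := by
  refine ⟨proposal_of_held, fun hp => ?_⟩
  by_contra hne
  have hrej : c ∈ rejectStep E V U R h := mem_union_right _ (by simpa using ⟨hp, hne⟩)
  exact (proposal_spec hp).2 (hfix ▸ hrej)

variable (E V U)

theorem exists_isStable : ∃ μ : Matching C H, μ.IsStable E U V := by
  obtain ⟨R, hfix, hR⟩ := exists_rejectStep_fixed (E := E) (V := V) (U := U)
  refine ⟨⟨held E V U R, proposal E V R, fun c h => held_eq_some_iff_of_fixed hfix⟩,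
    fun c h hp => (proposal_spec hp).1, fun c h hE => ?_⟩
  by_cases hc : c ∈ R h
  · exact Or.inl (hR h c hc)
  · exact Or.inr (exists_proposal_ge hE hc)

end DeferredAcceptance

namespace Matching

variable {C H : Type} [Fintype C] [Fintype H]

noncomputable def stableMatching (E : C → H → Prop) (U : C → H → ℝ) (V : H → C → ℝ) :
    Matching C H :=
  (DeferredAcceptance.exists_isStable E V U).choose

theorem isStable_stableMatching (E : C → H → Prop) (U : C → H → ℝ) (V : H → C → ℝ) :
    (stableMatching E U V).IsStable E U V :=
  (DeferredAcceptance.exists_isStable E V U).choose_spec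

end Matching

namespace Market

open Matching

variable {C H : Type} [Fintype C] [Fintype H] (M : Market C H)

-- The binder `(_ : k < t)` makes the recursion well founded; `singleOfferDA_eq` restates the
-- eligibility through `activeC`.
noncomputable def singleOfferDA (a : Actions H) (t : ℕ) : Matching C H :=
  stableMatching
    (fun c h => M.arrC c ≤ t ∧ M.arrH h ≤ t ∧ 0 ≤ M.U c h ∧ 0 ≤ M.V h c ∧
      ∀ k (_ : k < t), (singleOfferDA a k).toChild h = none ∧
        ∀ h', (singleOfferDA a k).toHome c = some h' → a h' k = false)
    M.U M.V
termination_by t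

def offerEligible (Q : Mechanism C H) (a : Actions H) (t : ℕ) (c : C) (h : H) : Prop :=
  M.activeC Q a c t ∧ M.arrH h ≤ t ∧ (∀ k < t, (Q a k).toChild h = none) ∧
    0 ≤ M.U c h ∧ 0 ≤ M.V h c

theorem singleOfferDA_eq (a : Actions H) (t : ℕ) :
    M.singleOfferDA a t = stableMatching (M.offerEligible M.singleOfferDA a t) M.U M.V := by
  rw [singleOfferDA]
  congr 1
  funext c h
  simp only [offerEligible, activeC, eq_iff_iff]
  grind

variable {M}

theorem offerEligible_of_toChild {a : Actions H} {t : ℕ} {c : C} {h : H}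
    (hh : (M.singleOfferDA a t).toChild h = some c) :
    M.offerEligible M.singleOfferDA a t c h := by
  rw [singleOfferDA_eq] at hh
  exact (isStable_stableMatching _ _ _).acceptable c h hh

theorem offerEligible_of_toHome {a : Actions H} {t : ℕ} {c : C} {h : H}
    (hc : (M.singleOfferDA a t).toHome c = some h) :
    M.offerEligible M.singleOfferDA a t c h :=
  offerEligible_of_toChild (((M.singleOfferDA a t).consistent c h).mp hc)

theorem singleOfferDA_congr {a b : Actions H} {t : ℕ}
    (hab : ∀ k < t, ∀ h, (M.singleOfferDA a k).toChild h ≠ none → a h k = b h k) :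
    ∀ k ≤ t, M.singleOfferDA a k = M.singleOfferDA b k := by
  intro k
  induction k using Nat.strong_induction_on with
  | _ k ih =>
    intro hk
    have hprev : ∀ j < k, M.singleOfferDA a j = M.singleOfferDA b j :=
      fun j hj => ih j hj (hj.le.trans hk)
    have hact : ∀ j < k, ∀ c h, (M.singleOfferDA a j).toHome c = some h → a h j = b h j :=
      fun j hj c h hc => hab j (hj.trans_le hk) h
        (by simp [((M.singleOfferDA a j).consistent c h).mp hc])
    rw [singleOfferDA_eq, singleOfferDA_eq]
    congr 1
    funext c h
    simp only [offerEligible, activeC, eq_iff_iff]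
    grind

variable (M)

theorem feasible_singleOfferDA : M.feasible M.singleOfferDA := by
  intro a t c h hc
  obtain ⟨hactive, harr, hunoffered, -⟩ := offerEligible_of_toHome hc
  exact ⟨hactive, harr, fun ⟨k, hk, hne, _⟩ => hne (hunoffered k hk)⟩

theorem justifiedEnvyFree_singleOfferDA : M.justifiedEnvyFree M.singleOfferDA := by
  intro a t c h h' c' hc hh ⟨hU, hV⟩
  obtain ⟨hactive, -, -, hUc, -⟩ := offerEligible_of_toHome hc
  obtain ⟨-, harr, hunoffered, -, hVh⟩ := offerEligible_of_toChild hh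
  have hE : M.offerEligible M.singleOfferDA a t c h :=
    ⟨hactive, harr, hunoffered, hUc.trans hU.le, hVh.trans hV.le⟩
  rw [singleOfferDA_eq] at hc hh
  exact (isStable_stableMatching _ _ _).not_blocking hE hc hh ⟨hU, hV⟩

theorem individuallyRational_singleOfferDA : M.individuallyRational M.singleOfferDA := by
  intro a t c h hc
  obtain ⟨-, -, -, hU, hV⟩ := offerEligible_of_toHome hc
  exact ⟨hU, hV⟩

theorem patienceFree_singleOfferDA : M.patienceFree M.singleOfferDA := by
  intro a t h c hh t' ht' c' hh'
  obtain ⟨-, -, hunoffered, -⟩ := offerEligible_of_toChild hh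
  have hsame : M.singleOfferDA a t = M.singleOfferDA (cfProfile a h t') t := by
    refine singleOfferDA_congr (fun k hk h₀ hne => ?_) t le_rfl
    have : h₀ ≠ h := by rintro rfl; exact hne (hunoffered k hk)
    simp [cfProfile, this]
  obtain ⟨-, -, hunoffered', -⟩ := offerEligible_of_toChild hh'
  have hnone := hunoffered' t ht'
  rw [← hsame, hh] at hnone
  exact absurd hnone (Option.some_ne_none c)

theorem weaklyNonWasteful_singleOfferDA : M.weaklyNonWasteful M.singleOfferDA := by
  rintro t ⟨c, h, hactive, ⟨harr, hnotAccepted⟩, hU, hV, hc, hh⟩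
  have hunoffered : ∀ k < t, (M.singleOfferDA (fun _ _ => true) k).toChild h = none :=
    fun k hk => by_contra fun hne => hnotAccepted ⟨k, hk, hne, rfl⟩
  rw [singleOfferDA_eq] at hc hh
  exact (isStable_stableMatching _ _ _).not_unmatched ⟨hactive, harr, hunoffered, hU, hV⟩ hc hh

end Market

theorem dynamicEnvyFree_weaklyNonWasteful_exists_general {C H : Type} [Finite C] [Finite H]
    (M : Market C H) :
    ∃ Q : Mechanism C H,
      M.feasible Q ∧ M.dynamicEnvyFree Q ∧ M.weaklyNonWasteful Q := by
  have := Fintype.ofFinite C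
  have := Fintype.ofFinite H
  exact ⟨M.singleOfferDA, M.feasible_singleOfferDA,
    ⟨M.justifiedEnvyFree_singleOfferDA, M.patienceFree_singleOfferDA,
      M.individuallyRational_singleOfferDA⟩, M.weaklyNonWasteful_singleOfferDA⟩

/-- Corollary 1: a dynamic envy-free and weakly non-wasteful mechanism always exists
(witnessed by HPDA), for any market with finitely many children and homes, strict
utilities, and positive waiting costs. -/
theorem dynamicEnvyFree_weaklyNonWasteful_exists {C H : Type} [Finite C] [Finite H]
    (M : Market C H) (hwC : 0 < M.wC) (hwH : 0 < M.wH)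
    (strictU : ∀ c h h', h ≠ h' → M.U c h ≠ M.U c h')
    (strictV : ∀ h c c', c ≠ c' → M.V h c ≠ M.V h c') :
    ∃ Q : Mechanism C H,
      M.feasible Q ∧ M.dynamicEnvyFree Q ∧ M.weaklyNonWasteful Q :=
  dynamicEnvyFree_weaklyNonWasteful_exists_general M
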